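/- (Theorem 1, fidelity form) For every density operator ρ on ℂ^d ⊗ ℂ^d (positive semidefinite with trace 1), the squared fidelity with the target pure state satisfies F(ρ, ψ)² := tr(ρ |ψ⟩⟨ψ|) ≥ tr(ρP) + tr(ρQ) − 1, where P = Σ_{j=1}^d |e_j⟩⟨e_j| ⊗ |e_j⟩⟨e_j| and Q = Σ_{α=1}^d |â_α⟩⟨â_α| ⊗ |ψ_α⟩⟨ψ_α|. -/

import Mathlib

open Matrix Kronecker
open scoped BigOperators ComplexOrder

noncomputable section

/-- Standard basis vector `e_j` of `ℂ^d`. -/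
def eVec (d : ℕ) (j : Fin d) : Fin d → ℂ := fun k => if k = j then 1 else 0

/-- Elementary tensor of two vectors in `ℂ^d`. -/
def tensorVec {d : ℕ} (v w : Fin d → ℂ) : Fin d × Fin d → ℂ := fun p => v p.1 * w p.2

/-- Outer product `|v⟩⟨w|`. -/
def outer {n : Type*} (v w : n → ℂ) : Matrix n n ℂ := Matrix.vecMulVec v (star w)

/-- Conjugate (mutually unbiased) basis vectors `â_α`. -/
def ahat (d : ℕ) (phi : Fin d → Fin d → ℝ) (α : Fin d) : Fin d → ℂ :=
  fun j => ((1 / Real.sqrt d : ℝ) : ℂ) * Complex.exp (Complex.I * (phi j α : ℂ))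

/-- The unit vectors `ψ_α = Σ_j √λ_j e^{-iφ(j,α)} e_j`. -/
def psiAlpha (d : ℕ) (lam : Fin d → ℝ) (phi : Fin d → Fin d → ℝ) (α : Fin d) : Fin d → ℂ :=
  fun j => ((Real.sqrt (lam j) : ℝ) : ℂ) * Complex.exp (-Complex.I * (phi j α : ℂ))

/-- The Schmidt-form state `ψ = Σ_j √λ_j e_j ⊗ e_j` in `ℂ^d ⊗ ℂ^d`. -/
def psiVec (d : ℕ) (lam : Fin d → ℝ) : Fin d × Fin d → ℂ :=
  ∑ j, ((Real.sqrt (lam j) : ℝ) : ℂ) • tensorVec (eVec d j) (eVec d j)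

/-- The projector `P = Σ_j |e_j⟩⟨e_j| ⊗ |e_j⟩⟨e_j|`. -/
def Pop (d : ℕ) : Matrix (Fin d × Fin d) (Fin d × Fin d) ℂ :=
  ∑ j, (outer (eVec d j) (eVec d j)) ⊗ₖ (outer (eVec d j) (eVec d j))

/-- The projector `Q = Σ_α |â_α⟩⟨â_α| ⊗ |ψ_α⟩⟨ψ_α|`. -/
def Qop (d : ℕ) (lam : Fin d → ℝ) (phi : Fin d → Fin d → ℝ) :
    Matrix (Fin d × Fin d) (Fin d × Fin d) ℂ :=
  ∑ α, (outer (ahat d phi α) (ahat d phi α)) ⊗ₖ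
      (outer (psiAlpha d lam phi α) (psiAlpha d lam phi α))

/-
`P` and `Q` are orthogonal projections: `Q` because the vectors `â_α ⊗ ψ_α` are orthonormal.
Moreover `P (â_α ⊗ ψ_α) = ψ / √d` for every `α`, while `Σ_α â_α ⊗ ψ_α = √d ψ` because the
matrix with columns `â_α` is unitary; hence `PQ = |ψ⟩⟨ψ|`. In particular `P` and `Q` commute, so
`1 - P - Q + |ψ⟩⟨ψ| = (1 - P)(1 - Q)` is again a projection and its trace against `ρ` is
nonnegative.
-/

section OuterProduct

variable {n ι : Type*} [Fintype n]

lemma isSelfAdjoint_outer_self (v : n → ℂ) : IsSelfAdjoint (outer v v) :=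
  (posSemidef_vecMulVec_self_star v).isHermitian

lemma outer_mul_outer (u v w x : n → ℂ) :
    outer u v * outer w x = (star v ⬝ᵥ w) • outer u x := by
  simp only [outer, vecMulVec_mul_vecMulVec, vecMulVec_smul]

lemma isStarProjection_sum_outer [Fintype ι] [DecidableEq ι] (v : ι → n → ℂ)
    (hv : ∀ i j, star (v i) ⬝ᵥ v j = if i = j then 1 else 0) :
    IsStarProjection (∑ i, outer (v i) (v i)) where
  isSelfAdjoint := isSelfAdjoint_sum _ fun i _ => isSelfAdjoint_outer_self (v i)
  isIdempotentElem := by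
    simp only [IsIdempotentElem, Finset.sum_mul_sum, outer_mul_outer, hv, ite_smul, one_smul,
      zero_smul, Finset.sum_ite_eq, Finset.mem_univ, if_true]

lemma trace_mul_re_nonneg_of_isStarProjection {ρ M : Matrix n n ℂ}
    (hρ : ρ.PosSemidef) (hM : IsStarProjection M) : 0 ≤ (ρ * M).trace.re := by
  have h : (ρ * M).trace = (Mᴴ * ρ * M).trace := by
    rw [← Matrix.star_eq_conjTranspose, hM.isSelfAdjoint.star_eq, trace_mul_comm (M * ρ),
      ← Matrix.mul_assoc, hM.isIdempotentElem.eq, trace_mul_comm]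
  exact h ▸ (Complex.nonneg_iff.mp (hρ.conjTranspose_mul_mul_same M).trace_nonneg).1

lemma sum_mul_star_eq_of_orthonormal [Fintype ι] [DecidableEq ι] (u : ι → ι → ℂ)
    (hu : ∀ α β, star (u α) ⬝ᵥ u β = if α = β then 1 else 0) (j k : ι) :
    ∑ α, u α j * star (u α k) = if j = k then 1 else 0 := by
  let U : Matrix ι ι ℂ := Matrix.of fun j α => u α j
  have hU : Uᴴ * U = 1 := by
    ext α β
    simpa [U, Matrix.mul_apply, dotProduct, Matrix.one_apply] using hu α β
  have hU' : U * Uᴴ = 1 := mul_eq_one_comm.mp hU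
  simpa [U, Matrix.mul_apply, Matrix.one_apply] using congrFun (congrFun hU' j) k

end OuterProduct

lemma outer_kronecker_outer {d : ℕ} (a b c e : Fin d → ℂ) :
    outer a b ⊗ₖ outer c e = outer (tensorVec a c) (tensorVec b e) := by
  ext ⟨i, j⟩ ⟨k, l⟩
  simp only [outer, kroneckerMap_apply, vecMulVec_apply, tensorVec, Pi.star_apply, star_mul']
  ring

lemma star_tensorVec_dotProduct {d : ℕ} (v w v' w' : Fin d → ℂ) :
    star (tensorVec v w) ⬝ᵥ tensorVec v' w' = (star v ⬝ᵥ v') * (star w ⬝ᵥ w') := by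
  simp only [dotProduct, tensorVec, Pi.star_apply, Fintype.sum_prod_type, star_mul',
    Finset.sum_mul_sum]
  exact Finset.sum_congr rfl fun _ _ => Finset.sum_congr rfl fun _ _ => by ring

section Bipartite

variable {d : ℕ}

def mubVec (d : ℕ) (lam : Fin d → ℝ) (phi : Fin d → Fin d → ℝ) (α : Fin d) :
    Fin d × Fin d → ℂ :=
  tensorVec (ahat d phi α) (psiAlpha d lam phi α)

lemma tensorVec_eVec_self (j : Fin d) : tensorVec (eVec d j) (eVec d j) = Pi.single (j, j) 1 := by
  ext ⟨a, b⟩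
  by_cases ha : a = j <;> by_cases hb : b = j <;> simp [tensorVec, eVec, ha, hb]

lemma Pop_eq_sum_outer :
    Pop d = ∑ j, outer (Pi.single (j, j) 1 : Fin d × Fin d → ℂ) (Pi.single (j, j) 1) := by
  simp only [Pop, outer_kronecker_outer, tensorVec_eVec_self]

lemma Qop_eq_sum_outer (lam : Fin d → ℝ) (phi : Fin d → Fin d → ℝ) :
    Qop d lam phi = ∑ α, outer (mubVec d lam phi α) (mubVec d lam phi α) := by
  simp only [Qop, outer_kronecker_outer, mubVec]

lemma isStarProjection_Pop : IsStarProjection (Pop d) := by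
  rw [Pop_eq_sum_outer]
  exact isStarProjection_sum_outer _ fun i j => by simp [Pi.single_apply, eq_comm]

lemma conj_exp_I_mul_ofReal (t : ℝ) :
    starRingEnd ℂ (Complex.exp (Complex.I * t)) = Complex.exp (-Complex.I * t) := by
  rw [← Complex.exp_conj]
  simp

lemma exp_I_mul_ofReal_mul_conj (t : ℝ) :
    Complex.exp (Complex.I * t) * starRingEnd ℂ (Complex.exp (Complex.I * t)) = 1 := by
  rw [RCLike.mul_conj, Complex.norm_exp_I_mul_ofReal]
  norm_num

lemma star_psiAlpha_dotProduct_self {lam : Fin d → ℝ} (hlam : ∀ j, 0 ≤ lam j)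
    (hsum : ∑ j, lam j = 1) (phi : Fin d → Fin d → ℝ) (α : Fin d) :
    star (psiAlpha d lam phi α) ⬝ᵥ psiAlpha d lam phi α = 1 := by
  have hterm (j : Fin d) :
      starRingEnd ℂ (psiAlpha d lam phi α j) * psiAlpha d lam phi α j = lam j := by
    rw [psiAlpha, map_mul, ← conj_exp_I_mul_ofReal, Complex.conj_conj, Complex.conj_ofReal,
      mul_mul_mul_comm, exp_I_mul_ofReal_mul_conj, mul_one, ← Complex.ofReal_mul,
      Real.mul_self_sqrt (hlam j)]
  simp only [dotProduct, Pi.star_apply, RCLike.star_def, hterm]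
  exact_mod_cast hsum

lemma star_mubVec_dotProduct {lam : Fin d → ℝ} (hlam : ∀ j, 0 ≤ lam j)
    (hsum : ∑ j, lam j = 1) {phi : Fin d → Fin d → ℝ}
    (hMUB : ∀ α β : Fin d, star (ahat d phi α) ⬝ᵥ ahat d phi β = if α = β then 1 else 0)
    (α β : Fin d) :
    star (mubVec d lam phi α) ⬝ᵥ mubVec d lam phi β = if α = β then 1 else 0 := by
  rw [mubVec, mubVec, star_tensorVec_dotProduct, hMUB]
  split_ifs with h
  · rw [h, star_psiAlpha_dotProduct_self hlam hsum, one_mul]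
  · rw [zero_mul]

lemma isStarProjection_Qop {lam : Fin d → ℝ} (hlam : ∀ j, 0 ≤ lam j)
    (hsum : ∑ j, lam j = 1) {phi : Fin d → Fin d → ℝ}
    (hMUB : ∀ α β : Fin d, star (ahat d phi α) ⬝ᵥ ahat d phi β = if α = β then 1 else 0) :
    IsStarProjection (Qop d lam phi) := by
  rw [Qop_eq_sum_outer]
  exact isStarProjection_sum_outer _ (star_mubVec_dotProduct hlam hsum hMUB)

lemma psiVec_eq_sum_single (lam : Fin d → ℝ) :
    psiVec d lam = ∑ j, ((Real.sqrt (lam j) : ℝ) : ℂ) • Pi.single (j, j) 1 := by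
  simp only [psiVec, tensorVec_eVec_self]

lemma psiVec_apply (lam : Fin d → ℝ) (j k : Fin d) :
    psiVec d lam (j, k) = if j = k then ((Real.sqrt (lam j) : ℝ) : ℂ) else 0 := by
  rw [psiVec_eq_sum_single]
  by_cases h : j = k
  · subst h; simp [Pi.single_apply]
  · simp only [Finset.sum_apply, Pi.smul_apply, Pi.single_apply, Prod.mk.injEq, smul_eq_mul,
      mul_ite, mul_one, mul_zero, h, if_false]
    exact Finset.sum_eq_zero fun i _ => if_neg fun hi => h (hi.1.trans hi.2.symm)

lemma mubVec_apply_self (lam : Fin d → ℝ) (phi : Fin d → Fin d → ℝ) (α j : Fin d) :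
    mubVec d lam phi α (j, j) = ((Real.sqrt (lam j) / Real.sqrt d : ℝ) : ℂ) := by
  rw [mubVec, tensorVec, ahat, psiAlpha, ← conj_exp_I_mul_ofReal]
  push_cast
  linear_combination ((Real.sqrt (lam j) : ℂ) / Real.sqrt d) *
    exp_I_mul_ofReal_mul_conj (phi j α)

lemma psiAlpha_eq_mul_conj_ahat (hd : d ≠ 0) (lam : Fin d → ℝ) (phi : Fin d → Fin d → ℝ)
    (α k : Fin d) :
    psiAlpha d lam phi α k =
      ((Real.sqrt d * Real.sqrt (lam k) : ℝ) : ℂ) * starRingEnd ℂ (ahat d phi α k) := by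
  have hsqrt : Real.sqrt d ≠ 0 := by positivity
  rw [psiAlpha, ahat, map_mul, Complex.conj_ofReal, conj_exp_I_mul_ofReal]
  push_cast
  field_simp

lemma sum_mubVec (hd : d ≠ 0) (lam : Fin d → ℝ) {phi : Fin d → Fin d → ℝ}
    (hMUB : ∀ α β : Fin d, star (ahat d phi α) ⬝ᵥ ahat d phi β = if α = β then 1 else 0) :
    ∑ α, mubVec d lam phi α = ((Real.sqrt d : ℝ) : ℂ) • psiVec d lam := by
  ext ⟨j, k⟩
  have hrow := sum_mul_star_eq_of_orthonormal _ hMUB j k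
  simp only [Complex.star_def] at hrow
  simp only [Finset.sum_apply, mubVec, tensorVec, psiAlpha_eq_mul_conj_ahat hd, Pi.smul_apply,
    psiVec_apply, smul_eq_mul, mul_left_comm (ahat d phi _ j), ← Finset.mul_sum, hrow]
  split_ifs with h
  · subst h; push_cast; ring
  · simp

lemma Pop_mulVec (x : Fin d × Fin d → ℂ) :
    Pop d *ᵥ x = ∑ j, x (j, j) • Pi.single (j, j) 1 := by
  simp [Pop_eq_sum_outer, outer, Matrix.sum_mulVec, vecMulVec_mulVec]

lemma Pop_mulVec_mubVec (lam : Fin d → ℝ) (phi : Fin d → Fin d → ℝ) (α : Fin d) :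
    Pop d *ᵥ mubVec d lam phi α = ((1 / Real.sqrt d : ℝ) : ℂ) • psiVec d lam := by
  simp only [Pop_mulVec, mubVec_apply_self, psiVec_eq_sum_single, Finset.smul_sum, smul_smul]
  congr! 2
  push_cast
  ring

lemma Pop_mul_Qop (hd : d ≠ 0) (lam : Fin d → ℝ) {phi : Fin d → Fin d → ℝ}
    (hMUB : ∀ α β : Fin d, star (ahat d phi α) ⬝ᵥ ahat d phi β = if α = β then 1 else 0) :
    Pop d * Qop d lam phi = outer (psiVec d lam) (psiVec d lam) := by
  have hsqrt : Real.sqrt d ≠ 0 := by positivity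
  calc Pop d * Qop d lam phi
      = ∑ α, outer (((1 / Real.sqrt d : ℝ) : ℂ) • psiVec d lam) (mubVec d lam phi α) := by
        simp only [Qop_eq_sum_outer, Finset.mul_sum, outer, mul_vecMulVec, Pop_mulVec_mubVec]
    _ = outer (((1 / Real.sqrt d : ℝ) : ℂ) • psiVec d lam) (∑ α, mubVec d lam phi α) := by
        ext
        simp only [outer, star_sum, Matrix.sum_apply, vecMulVec_apply, Finset.sum_apply,
          Finset.mul_sum]
    _ = outer (psiVec d lam) (psiVec d lam) := by
        rw [sum_mubVec hd lam hMUB, outer, star_smul, smul_vecMulVec, vecMulVec_smul, smul_smul,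
          Complex.star_def, Complex.conj_ofReal, ← Complex.ofReal_mul, one_div_mul_cancel hsqrt,
          Complex.ofReal_one, one_smul, outer]

end Bipartite

/-- Theorem 1, fidelity form: for every density operator `ρ`,
`tr(ρ|ψ⟩⟨ψ|) ≥ tr(ρP) + tr(ρQ) − 1`. -/
theorem stmt6 (d : ℕ) (hd : 1 ≤ d) (lam : Fin d → ℝ)
    (hlam : ∀ j, 0 ≤ lam j) (hsum : ∑ j, lam j = 1)
    (phi : Fin d → Fin d → ℝ)
    (hMUB : ∀ α β : Fin d,
      star (ahat d phi α) ⬝ᵥ ahat d phi β = if α = β then 1 else 0)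
    (ρ : Matrix (Fin d × Fin d) (Fin d × Fin d) ℂ)
    (hρ : ρ.PosSemidef) (hρtr : ρ.trace = 1) :
    (ρ * outer (psiVec d lam) (psiVec d lam)).trace.re ≥
      (ρ * Pop d).trace.re + (ρ * Qop d lam phi).trace.re - 1 := by
  have hP := isStarProjection_Pop (d := d)
  have hQ := isStarProjection_Qop hlam hsum hMUB
  have hPQ := Pop_mul_Qop (Nat.one_le_iff_ne_zero.mp hd) lam hMUB
  have hcomm : Commute (Pop d) (Qop d lam phi) :=
    (IsSelfAdjoint.commute_iff hP.isSelfAdjoint hQ.isSelfAdjoint).mpr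
      (hPQ ▸ isSelfAdjoint_outer_self _)
  have htrace := trace_mul_re_nonneg_of_isStarProjection hρ
    (hP.add_sub_mul_of_commute hcomm hQ).one_sub
  rw [hPQ, Matrix.mul_sub, Matrix.mul_sub, Matrix.mul_add, Matrix.mul_one, trace_sub, trace_sub,
    trace_add, hρtr] at htrace
  simp only [Complex.sub_re, Complex.add_re, Complex.one_re] at htrace
  linarith
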